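/- Let b ≥ 2 and let S ⊆ ℕ be ultimately periodic with smallest preperiod m > 1. Then for every digit a ∈ {0,...,b-1}, the smallest preperiod of Δ(S,a) = {n : nb + a ∈ S} is strictly smaller than m. -/

import Mathlib

def Delta (b : ℕ) (S : Set ℕ) (a : ℕ) : Set ℕ := {n | n * b + a ∈ S}

/-- The set of valid preperiods of `S`. -/
def Preperiods (S : Set ℕ) : Set ℕ :=
  {m | ∃ p ≥ 1, ∀ n ≥ m, (n ∈ S ↔ n + p ∈ S)}

/- A period `p` of `S` beyond `m` yields a period `p` of `Δ(S, a)` beyond any `k` with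
`k b + a ≥ m`, because `(n + p) b + a = (n b + a) + b p`. Taking `k = m - 1` works as soon as
`m ≥ 2` and `b ≥ 2`. -/

theorem mem_iff_add_mul_of_period {S : Set ℕ} {m p : ℕ}
    (hp : ∀ n ≥ m, (n ∈ S ↔ n + p ∈ S)) (k : ℕ) {n : ℕ} (hn : m ≤ n) :
    n ∈ S ↔ n + k * p ∈ S := by
  induction k with
  | zero => simp
  | succ k ih =>
    rw [ih, hp (n + k * p) (hn.trans (Nat.le_add_right _ _)), add_assoc, ← Nat.succ_mul]

theorem mem_preperiods_delta_of_le {b : ℕ} {S : Set ℕ} {m : ℕ} (hS : m ∈ Preperiods S)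
    (a : ℕ) {k : ℕ} (hk : m ≤ k * b + a) : k ∈ Preperiods (Delta b S a) := by
  obtain ⟨p, hp1, hp⟩ := hS
  refine ⟨p, hp1, fun n hn => ?_⟩
  have hmn : m ≤ n * b + a := hk.trans (by gcongr)
  change n * b + a ∈ S ↔ (n + p) * b + a ∈ S
  rw [mem_iff_add_mul_of_period hp b hmn, show (n + p) * b + a = n * b + a + b * p by ring]

theorem stmt_5_general (b : ℕ) (hb : 2 ≤ b) (S : Set ℕ) (m : ℕ)
    (hup : m ∈ Preperiods S) (hm : 1 < m) :
    ∀ a < b, sInf (Preperiods (Delta b S a)) < m := by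
  intro a _
  have hk : m ≤ (m - 1) * b + a := by
    have : (m - 1) * 2 ≤ (m - 1) * b := Nat.mul_le_mul_left _ hb
    omega
  exact (Nat.sInf_le (mem_preperiods_delta_of_le hup a hk)).trans_lt (Nat.sub_lt (by omega) one_pos)

theorem stmt_5 (b : ℕ) (hb : 2 ≤ b) (S : Set ℕ) (m : ℕ)
    (hup : m ∈ Preperiods S) (hmin : m = sInf (Preperiods S)) (hm : 1 < m) :
    ∀ a < b, sInf (Preperiods (Delta b S a)) < m :=
  stmt_5_general b hb S m hup hm
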